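/- arXiv:1009.2339 — 6 statements merged into one kernel-verified Lean document; each statement's English description precedes it below -/
import Mathlib

section
/- Let T be a tree with root 0 and partial order ≼, and let α, σ : T → (0,∞) be weight functions such that κ := sup_{s∈T} (∑_{v≼s} α(v)^q)^{1/q} σ(s) < ∞ for some q ≥ 1. Then the weighted summation operator V_{α,σ} defined by (V_{α,σ}μ)(t) := α(t) ∑_{s≽t} σ(s)μ(s) is a bounded linear operator from ℓ¹(T) to ℓ^q(T) with operator norm at most κ. -/
set_option maxHeartbeats 1000000
set_option synthInstance.maxHeartbeats 400000


open scoped ENNReal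

/-- Boundedness of the weighted summation operator.  Let `T` be a tree (root `r`, the set
of predecessors of any node is a finite chain) with weights `α, σ > 0` and `q ≥ 1` such
that `κ := sup_{s ∈ T} (∑_{v ≼ s} α(v)^q)^{1/q} σ(s) < ∞`.  Then the weighted summation
operator `(V_{α,σ} μ)(t) = α(t) ∑_{s ≽ t} σ(s) μ(s)` is a bounded linear operator from
`ℓ¹(T)` to `ℓ^q(T)` with operator norm at most `κ`. -/
theorem stmt_0 {T : Type*} [PartialOrder T] (r : T) (hr : ∀ t, r ≤ t)
    (hfin : ∀ s : T, (Set.Iic s).Finite)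
    (hchain : ∀ s : T, IsChain (· ≤ ·) (Set.Iic s))
    (α σ : T → ℝ) (hα : ∀ t, 0 < α t) (hσ : ∀ t, 0 < σ t)
    (q : ℝ) (hq : 1 ≤ q) (κ : ℝ)
    (hκ : ∀ s : T, (∑' v : Set.Iic s, α (v : T) ^ q) ^ (1 / q) * σ s ≤ κ) :
    letI : Fact ((1 : ℝ≥0∞) ≤ 1) := ⟨le_refl _⟩
    letI : Fact (1 ≤ ENNReal.ofReal q) := ⟨by rw [ENNReal.one_le_ofReal]; exact hq⟩
    ∃ V : lp (fun _ : T => ℝ) 1 →L[ℝ] lp (fun _ : T => ℝ) (ENNReal.ofReal q),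
      ‖V‖ ≤ κ ∧
      ∀ (μ : lp (fun _ : T => ℝ) 1) (t : T),
        (V μ : ∀ _ : T, ℝ) t = α t * ∑' s : {s : T // t ≤ s}, σ (s : T) * (μ : ∀ _ : T, ℝ) s := by
  classical
  letI : Fact ((1 : ℝ≥0∞) ≤ 1) := ⟨le_refl _⟩
  letI : Fact (1 ≤ ENNReal.ofReal q) := ⟨by rw [ENNReal.one_le_ofReal]; exact hq⟩
  have hq0 : (0:ℝ) < q := lt_of_lt_of_le one_pos hq
  set p : ℝ≥0∞ := ENNReal.ofReal q with hpdef
  have hpt : p.toReal = q := ENNReal.toReal_ofReal hq0.le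
  have hptpos : 0 < p.toReal := by rw [hpt]; exact hq0
  have hp0 : p ≠ 0 := (ENNReal.ofReal_pos.2 hq0).ne'
  -- κ is nonnegative
  have hκ0 : 0 ≤ κ := by
    refine le_trans ?_ (hκ r)
    exact mul_nonneg (Real.rpow_nonneg
      (tsum_nonneg fun v => Real.rpow_nonneg (hα _).le _) _) (hσ r).le
  -- the basic vectors e s = α · 1_{Iic s}
  have he_mem : ∀ s : T, Memℓp (fun t => if t ≤ s then α t else 0) p := by
    intro s
    apply memℓp_gen
    apply summable_of_ne_finset_zero (s := (hfin s).toFinset)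
    intro t ht
    have ht' : ¬ t ≤ s := by simpa using ht
    simp [if_neg ht', Real.zero_rpow hptpos.ne']
  let e : T → lp (fun _ : T => ℝ) p := fun s => ⟨_, he_mem s⟩
  have he_apply : ∀ s t, (e s : ∀ _ : T, ℝ) t = if t ≤ s then α t else 0 := fun _ _ => rfl
  have he_norm : ∀ s, ‖e s‖ = (∑' v : Set.Iic s, α (v : T) ^ q) ^ (1/q) := by
    intro s
    rw [lp.norm_eq_tsum_rpow hptpos, hpt]
    congr 1
    have hsupp : Function.support (fun t : T => ‖(e s : ∀ _ : T, ℝ) t‖ ^ q) ⊆ Set.Iic s := by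
      intro t ht
      by_contra h
      apply ht
      show ‖(e s : ∀ _ : T, ℝ) t‖ ^ q = 0
      rw [he_apply, if_neg (fun hc => h (Set.mem_Iic.2 hc)), norm_zero, Real.zero_rpow hq0.ne']
    rw [← tsum_subtype_eq_of_support_subset hsupp]
    exact (tsum_congr fun v => by
      rw [he_apply, if_pos (Set.mem_Iic.1 v.2), Real.norm_eq_abs, abs_of_pos (hα _)]).symm
  have he_bound : ∀ s, σ s * ‖e s‖ ≤ κ := fun s => by
    rw [he_norm, mul_comm]; exact hκ s
  -- summability facts about μ ∈ ℓ¹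
  have hμsum : ∀ μ : lp (fun _ : T => ℝ) 1, Summable (fun s => ‖(μ : ∀ _ : T, ℝ) s‖) := by
    intro μ
    have h := lp.memℓp μ
    rw [memℓp_gen_iff (by norm_num : (0:ℝ) < (1:ℝ≥0∞).toReal)] at h
    simpa using h
  have hμnorm : ∀ μ : lp (fun _ : T => ℝ) 1, ‖μ‖ = ∑' s, ‖(μ : ∀ _ : T, ℝ) s‖ := by
    intro μ
    rw [lp.norm_eq_tsum_rpow (by norm_num : (0:ℝ) < (1:ℝ≥0∞).toReal)]
    simp
  -- the summand family and its bounds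
  have hbd : ∀ (μ : lp (fun _ : T => ℝ) 1) (s : T),
      ‖(μ : ∀ _ : T, ℝ) s • (σ s • e s)‖ ≤ κ * ‖(μ : ∀ _ : T, ℝ) s‖ := by
    intro μ s
    rw [norm_smul, norm_smul, Real.norm_eq_abs (σ s), abs_of_pos (hσ s), mul_comm]
    exact mul_le_mul_of_nonneg_right (he_bound s) (norm_nonneg _)
  have key : ∀ μ : lp (fun _ : T => ℝ) 1,
      Summable (fun s : T => (μ : ∀ _ : T, ℝ) s • (σ s • e s)) := by
    intro μ
    exact Summable.of_norm_bounded ((hμsum μ).mul_left κ) (hbd μ)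
  have hns : ∀ μ : lp (fun _ : T => ℝ) 1,
      Summable (fun s : T => ‖(μ : ∀ _ : T, ℝ) s • (σ s • e s)‖) := by
    intro μ
    exact Summable.of_nonneg_of_le (fun _ => norm_nonneg _) (hbd μ) ((hμsum μ).mul_left κ)
  -- the linear map
  let L : lp (fun _ : T => ℝ) 1 →ₗ[ℝ] lp (fun _ : T => ℝ) p :=
    { toFun := fun μ => ∑' s : T, (μ : ∀ _ : T, ℝ) s • (σ s • e s)
      map_add' := by
        intro μ ν
        rw [← Summable.tsum_add (key μ) (key ν)]
        refine tsum_congr fun s => ?_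
        have : ((μ + ν : lp (fun _ : T => ℝ) 1) : ∀ _ : T, ℝ) s
            = (μ : ∀ _ : T, ℝ) s + (ν : ∀ _ : T, ℝ) s := by
          rw [lp.coeFn_add]; rfl
        rw [this, add_smul]
      map_smul' := by
        intro c μ
        rw [RingHom.id_apply, ← Summable.tsum_const_smul c (key μ)]
        refine tsum_congr fun s => ?_
        have : ((c • μ : lp (fun _ : T => ℝ) 1) : ∀ _ : T, ℝ) s = c * (μ : ∀ _ : T, ℝ) s := by
          rw [lp.coeFn_smul]; rfl
        rw [this]
        exact (smul_smul c _ _).symm }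
  have hLnorm : ∀ μ, ‖L μ‖ ≤ κ * ‖μ‖ := by
    intro μ
    calc ‖L μ‖ ≤ ∑' s, ‖(μ : ∀ _ : T, ℝ) s • (σ s • e s)‖ := norm_tsum_le_tsum_norm (hns μ)
      _ ≤ ∑' s, κ * ‖(μ : ∀ _ : T, ℝ) s‖ := Summable.tsum_le_tsum (hbd μ) (hns μ) ((hμsum μ).mul_left κ)
      _ = κ * ∑' s, ‖(μ : ∀ _ : T, ℝ) s‖ := tsum_mul_left
      _ = κ * ‖μ‖ := by rw [hμnorm]
  refine ⟨L.mkContinuous κ hLnorm, LinearMap.mkContinuous_norm_le L hκ0 _, ?_⟩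
  intro μ t
  -- evaluation at t is a continuous linear functional
  let ev : lp (fun _ : T => ℝ) p →L[ℝ] ℝ :=
    LinearMap.mkContinuous
      { toFun := fun f => (f : ∀ _ : T, ℝ) t
        map_add' := fun f g => by
          show ((f + g : lp (fun _ : T => ℝ) p) : ∀ _ : T, ℝ) t = _
          rw [lp.coeFn_add]; rfl
        map_smul' := fun c f => by
          show ((c • f : lp (fun _ : T => ℝ) p) : ∀ _ : T, ℝ) t = _
          rw [lp.coeFn_smul]; rfl } 1
      (fun f => by simpa using lp.norm_apply_le_norm hp0 f t)
  have hev : ∀ f : lp (fun _ : T => ℝ) p, ev f = (f : ∀ _ : T, ℝ) t := fun _ => rfl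
  have h1 : (L.mkContinuous κ hLnorm μ : ∀ _ : T, ℝ) t
      = ∑' s : T, (μ : ∀ _ : T, ℝ) s * (σ s * (e s : ∀ _ : T, ℝ) t) := by
    have h2 : (L.mkContinuous κ hLnorm μ : ∀ _ : T, ℝ) t = ev (L μ) := rfl
    have hL : L μ = ∑' s : T, (μ : ∀ _ : T, ℝ) s • (σ s • e s) := rfl
    rw [h2, hL, ContinuousLinearMap.map_tsum ev (key μ)]
    exact tsum_congr fun s => by rw [hev]; simp [smul_smul, mul_assoc]
  rw [h1]
  have hsupp : Function.support
      (fun s : T => (μ : ∀ _ : T, ℝ) s * (σ s * (e s : ∀ _ : T, ℝ) t)) ⊆ {s : T | t ≤ s} := by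
    intro s hs
    by_contra h
    apply hs
    show (μ : ∀ _ : T, ℝ) s * (σ s * (e s : ∀ _ : T, ℝ) t) = 0
    rw [he_apply, if_neg ((fun hc => h hc) : ¬ t ≤ s), mul_zero, mul_zero]
  have h3 : (∑' s : {s : T // t ≤ s},
        ((μ : ∀ _ : T, ℝ) (s : T) * (σ (s : T) * (e (s : T) : ∀ _ : T, ℝ) t)))
      = ∑' s : T, (μ : ∀ _ : T, ℝ) s * (σ s * (e s : ∀ _ : T, ℝ) t) :=
    tsum_subtype_eq_of_support_subset hsupp
  rw [← h3, ← tsum_mul_left]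
  refine tsum_congr fun s => ?_
  rw [he_apply, if_pos s.2]
  ring
end

section
/- Let V : X → Y be a bounded linear operator between Banach spaces and let {V_γ : γ ∈ Γ} be a finite collection of bounded operators from X to Y. Set M := ⌊log₂(#Γ)⌋ + 1. Then for each k ≥ 1, e_{k+M}(V) ≤ sup_{γ∈Γ} e_k(V_γ) + sup_{‖x‖_X ≤ 1} inf_{γ∈Γ} ‖Vx − V_γ x‖_Y, where e_n denotes the n-th dyadic entropy number. -/
/-- The `n`-th dyadic entropy number of a bounded operator `V : X → Y`:
the infimum of all `ε > 0` such that `V(B_X)` is covered by at most `2^{n-1}`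
open `ε`-balls in `Y`. -/
noncomputable def entropyNumber {X Y : Type*} [NormedAddCommGroup X] [NormedSpace ℝ X]
    [NormedAddCommGroup Y] [NormedSpace ℝ Y] (n : ℕ) (V : X →L[ℝ] Y) : ℝ :=
  sInf {ε : ℝ | 0 < ε ∧ ∃ C : Finset Y, C.card ≤ 2 ^ (n - 1) ∧
    ∀ x : X, ‖x‖ ≤ 1 → ∃ y ∈ C, ‖V x - y‖ < ε}

lemma entropySet_nonempty {X Y : Type*} [NormedAddCommGroup X] [NormedSpace ℝ X]
    [NormedAddCommGroup Y] [NormedSpace ℝ Y] (n : ℕ) (W : X →L[ℝ] Y) :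
    {ε : ℝ | 0 < ε ∧ ∃ C : Finset Y, C.card ≤ 2 ^ (n - 1) ∧
      ∀ x : X, ‖x‖ ≤ 1 → ∃ y ∈ C, ‖W x - y‖ < ε}.Nonempty := by
  refine ⟨‖W‖ + 1, by positivity, {0}, by simpa using Nat.one_le_two_pow, ?_⟩
  intro x hx
  refine ⟨0, by simp, ?_⟩
  have h1 : ‖W x‖ ≤ ‖W‖ * ‖x‖ := W.le_opNorm x
  have h2 : ‖W‖ * ‖x‖ ≤ ‖W‖ * 1 := mul_le_mul_of_nonneg_left hx (norm_nonneg W)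
  simpa using lt_of_le_of_lt (h1.trans h2) (by linarith)

lemma entropySet_bddBelow {X Y : Type*} [NormedAddCommGroup X] [NormedSpace ℝ X]
    [NormedAddCommGroup Y] [NormedSpace ℝ Y] (n : ℕ) (W : X →L[ℝ] Y) :
    BddBelow {ε : ℝ | 0 < ε ∧ ∃ C : Finset Y, C.card ≤ 2 ^ (n - 1) ∧
      ∀ x : X, ‖x‖ ≤ 1 → ∃ y ∈ C, ‖W x - y‖ < ε} :=
  ⟨0, fun _ he => he.1.le⟩

lemma entropyNumber_nonneg {X Y : Type*} [NormedAddCommGroup X] [NormedSpace ℝ X]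
    [NormedAddCommGroup Y] [NormedSpace ℝ Y] (n : ℕ) (W : X →L[ℝ] Y) :
    0 ≤ entropyNumber n W :=
  le_csInf (entropySet_nonempty n W) fun _ he => he.1.le

lemma entropyNumber_lt {X Y : Type*} [NormedAddCommGroup X] [NormedSpace ℝ X]
    [NormedAddCommGroup Y] [NormedSpace ℝ Y] {n : ℕ} {W : X →L[ℝ] Y} {ε : ℝ}
    (h : entropyNumber n W < ε) :
    ∃ C : Finset Y, C.card ≤ 2 ^ (n - 1) ∧ ∀ x : X, ‖x‖ ≤ 1 → ∃ y ∈ C, ‖W x - y‖ < ε := by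
  obtain ⟨e, ⟨-, C, hcard, hcov⟩, hlt⟩ := exists_lt_of_csInf_lt (entropySet_nonempty n W) h
  exact ⟨C, hcard, fun x hx => by
    obtain ⟨y, hy, hny⟩ := hcov x hx
    exact ⟨y, hy, hny.trans hlt⟩⟩

/-- Approximation principle for entropy numbers: if `{V_γ : γ ∈ Γ}` is a finite family of
operators and `M := ⌊log₂ #Γ⌋ + 1`, then for every `k ≥ 1`,
`e_{k+M}(V) ≤ sup_γ e_k(V_γ) + sup_{‖x‖ ≤ 1} inf_γ ‖Vx - V_γ x‖`. -/
theorem stmt_3 {X Y : Type*} [NormedAddCommGroup X] [NormedSpace ℝ X] [CompleteSpace X]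
    [NormedAddCommGroup Y] [NormedSpace ℝ Y] [CompleteSpace Y]
    (V : X →L[ℝ] Y) {Γ : Type*} [Fintype Γ] [Nonempty Γ] (Vf : Γ → (X →L[ℝ] Y))
    (k : ℕ) (hk : 1 ≤ k) :
    entropyNumber (k + (Nat.log 2 (Fintype.card Γ) + 1)) V ≤
      (⨆ γ : Γ, entropyNumber k (Vf γ)) +
        ⨆ x : {x : X // ‖x‖ ≤ 1}, ⨅ γ : Γ, ‖V (x : X) - Vf γ (x : X)‖ := by
  set M := Nat.log 2 (Fintype.card Γ) + 1 with hM
  set A := ⨆ γ : Γ, entropyNumber k (Vf γ) with hA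
  set D := ⨆ x : {x : X // ‖x‖ ≤ 1}, ⨅ γ : Γ, ‖V (x : X) - Vf γ (x : X)‖ with hD
  obtain ⟨γ₀⟩ := ‹Nonempty Γ›
  have hAbdd : BddAbove (Set.range fun γ : Γ => entropyNumber k (Vf γ)) :=
    Set.Finite.bddAbove (Set.finite_range _)
  have hAle : ∀ γ : Γ, entropyNumber k (Vf γ) ≤ A := fun γ => le_ciSup hAbdd γ
  have hA0 : 0 ≤ A := (entropyNumber_nonneg k (Vf γ₀)).trans (hAle γ₀)
  have hIbdd : ∀ x : X, BddBelow (Set.range fun γ : Γ => ‖V x - Vf γ x‖) :=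
    fun x => ⟨0, by rintro _ ⟨γ, rfl⟩; positivity⟩
  have hDbdd : BddAbove (Set.range fun x : {x : X // ‖x‖ ≤ 1} =>
      ⨅ γ : Γ, ‖V (x : X) - Vf γ (x : X)‖) := by
    refine ⟨‖V‖ + ‖Vf γ₀‖, ?_⟩
    rintro _ ⟨x, rfl⟩
    calc (⨅ γ : Γ, ‖V (x : X) - Vf γ (x : X)‖) ≤ ‖V (x : X) - Vf γ₀ (x : X)‖ :=
        ciInf_le (hIbdd x) γ₀
      _ ≤ ‖V (x : X)‖ + ‖Vf γ₀ (x : X)‖ := norm_sub_le _ _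
      _ ≤ ‖V‖ * ‖(x : X)‖ + ‖Vf γ₀‖ * ‖(x : X)‖ :=
        add_le_add (V.le_opNorm _) ((Vf γ₀).le_opNorm _)
      _ ≤ ‖V‖ * 1 + ‖Vf γ₀‖ * 1 := by
        gcongr <;> exact x.2
      _ = ‖V‖ + ‖Vf γ₀‖ := by ring
  have hDle : ∀ x : X, ‖x‖ ≤ 1 → (⨅ γ : Γ, ‖V x - Vf γ x‖) ≤ D :=
    fun x hx => le_ciSup hDbdd (⟨x, hx⟩ : {x : X // ‖x‖ ≤ 1})
  have hD0 : 0 ≤ D := by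
    have h0 : (⨅ γ : Γ, ‖V (0 : X) - Vf γ (0 : X)‖) ≤ D := hDle 0 (by simp)
    have : (⨅ γ : Γ, ‖V (0 : X) - Vf γ (0 : X)‖) = 0 := by simp
    linarith
  classical
  refine le_of_forall_pos_le_add fun ε hε => ?_
  refine csInf_le (entropySet_bddBelow _ V) ⟨by positivity, ?_⟩
  -- build covers for each γ
  have hcov : ∀ γ : Γ, ∃ C : Finset Y, C.card ≤ 2 ^ (k - 1) ∧
      ∀ x : X, ‖x‖ ≤ 1 → ∃ y ∈ C, ‖Vf γ x - y‖ < A + ε :=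
    fun γ => entropyNumber_lt (lt_of_le_of_lt (hAle γ) (by linarith))
  choose C hCcard hCcov using hcov
  refine ⟨Finset.univ.biUnion C, ?_, ?_⟩
  · calc (Finset.univ.biUnion C).card ≤ ∑ γ : Γ, (C γ).card := Finset.card_biUnion_le
      _ ≤ ∑ _γ : Γ, 2 ^ (k - 1) := Finset.sum_le_sum fun γ _ => hCcard γ
      _ = Fintype.card Γ * 2 ^ (k - 1) := by simp [Finset.sum_const, mul_comm]
      _ ≤ 2 ^ M * 2 ^ (k - 1) := by
        have := (Nat.lt_pow_succ_log_self (by norm_num : 1 < 2) (Fintype.card Γ)).le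
        exact Nat.mul_le_mul_right _ this
      _ = 2 ^ (k + M - 1) := by
        rw [← pow_add]
        congr 1
        omega
  · intro x hx
    obtain ⟨γ, hγ⟩ := exists_eq_ciInf_of_finite (f := fun γ : Γ => ‖V x - Vf γ x‖)
    obtain ⟨y, hy, hny⟩ := hCcov γ x hx
    refine ⟨y, Finset.mem_biUnion.2 ⟨γ, Finset.mem_univ _, hy⟩, ?_⟩
    calc ‖V x - y‖ ≤ ‖V x - Vf γ x‖ + ‖Vf γ x - y‖ := norm_sub_le_norm_sub_add_norm_sub _ _ _
      _ < D + (A + ε) := by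
        have : ‖V x - Vf γ x‖ ≤ D := hγ.le.trans (hDle x hx)
        linarith
      _ = A + D + ε := by ring
end

section
/- Let T be a tree and let 𝔅 be the set of all pairs (B, m) where B belongs to a refining sequence of tree partitions (𝔅_m)_{m≥0} of T with 𝔅₀ = {T}. Fix n ≥ 1 and μ ∈ ℓ¹(T) with ‖μ‖₁ ≤ 1. Call an element B ∈ 𝔅_m heavy if |μ|(B) > m/n. Let 𝔗 be the set of heavy elements and Q the set of terminal elements of the subtree 𝔗 of 𝔅. Then ∑_{B∈Q} |B| < n, where |B| = m is the level of B, and consequently #𝔗 ≤ n. -/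
open scoped ENNReal

/-!
Every heavy element lies above a terminal one, and distinct terminal elements are disjoint
subsets of `T`: two terminal elements at levels `m ≤ k` cannot be nested, since the ancestor at
level `m + 1` of the deeper one would be a heavy child of the shallower one. Disjointness gives
`∑_{B ∈ Q} |B| / n < ∑_{B ∈ Q} |μ|(B) ≤ 1`. Every heavy element other than the root is
determined by its level together with a terminal element below it, and a terminal element at
level `m` has `m` ancestors of positive level, so `#𝔗 ≤ 1 + ∑_{B ∈ Q} |B| ≤ n`.
-/

section Summation

variable {T ι : Type*} {f : T → ℝ}

theorem Summable.tsum_subtype_mono (hf : Summable f) (hf0 : 0 ≤ f) {s t : Set T} (hst : s ⊆ t) :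
    ∑' x : s, f x ≤ ∑' x : t, f x := by
  rw [tsum_subtype, tsum_subtype]
  exact Summable.tsum_le_tsum (Set.indicator_le_indicator_of_subset hst hf0) (hf.indicator s)
    (hf.indicator t)

theorem Summable.sum_tsum_subtype_le_of_pairwiseDisjoint (hf : Summable f) (hf0 : 0 ≤ f)
    {I : Finset ι} {s : ι → Set T} (hs : (I : Set ι).PairwiseDisjoint s) :
    ∑ i ∈ I, ∑' x : s i, f x ≤ ∑' x, f x := by
  rw [← Summable.tsum_finset_bUnion_disjoint hs fun i _ => hf.subtype (s i)]
  exact hf.tsum_subtype_le f _ hf0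

end Summation

theorem Set.finite_and_natCard_le_of_forall_finset_card_le {α : Type*} {s : Set α} {n : ℕ}
    (h : ∀ F : Finset α, ↑F ⊆ s → F.card ≤ n) : s.Finite ∧ Nat.card s ≤ n := by
  have hs : s.Finite := by
    by_contra hs
    obtain ⟨F, hFs, hF⟩ := Set.Infinite.exists_subset_card_eq hs (n + 1)
    have := h F hFs
    omega
  refine ⟨hs, ?_⟩
  rw [Nat.card_coe_set_eq, Set.ncard_eq_toFinset_card s hs]
  exact h _ (by simp)

namespace TreePartition

variable {T : Type*} {B : ℕ → Set (Set T)} {n : ℕ} {μ : T → ℝ}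

theorem exists_superset_of_le (hrefine : ∀ m, ∀ A ∈ B (m + 1), ∃ A' ∈ B m, A ⊆ A')
    {m k : ℕ} (hmk : m ≤ k) {A : Set T} (hA : A ∈ B k) : ∃ C ∈ B m, A ⊆ C := by
  induction k, hmk using Nat.le_induction generalizing A with
  | base => exact ⟨A, hA, subset_rfl⟩
  | succ k _ ih =>
    obtain ⟨A', hA', hAA'⟩ := hrefine k A hA
    obtain ⟨C, hC, hA'C⟩ := ih hA'
    exact ⟨C, hC, hAA'.trans hA'C⟩

theorem eq_of_subset_of_subset (hne : ∀ m, ∀ A ∈ B m, A.Nonempty)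
    (hdisj : ∀ m, (B m).PairwiseDisjoint id) {k m : ℕ} {A C C' : Set T} (hA : A ∈ B k)
    (hC : C ∈ B m) (hC' : C' ∈ B m) (hAC : A ⊆ C) (hAC' : A ⊆ C') : C = C' :=
  let ⟨x, hx⟩ := hne k A hA
  (hdisj m).elim_set hC hC' x (hAC hx) (hAC' hx)

/-- The pair `(m, A)` stands for `A ∈ 𝔅_m`. -/
def IsHeavy (B : ℕ → Set (Set T)) (n : ℕ) (μ : T → ℝ) (p : ℕ × Set T) : Prop :=
  p.2 ∈ B p.1 ∧ (p.1 : ℝ) / n < ∑' t : p.2, |μ t|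

def IsTerminalHeavy (B : ℕ → Set (Set T)) (n : ℕ) (μ : T → ℝ) (p : ℕ × Set T) : Prop :=
  IsHeavy B n μ p ∧ ∀ A' ∈ B (p.1 + 1), A' ⊆ p.2 → ¬ IsHeavy B n μ (p.1 + 1, A')

theorem IsHeavy.fst_lt (hn : 1 ≤ n) (hsum : Summable fun t => |μ t|) (hμ : ∑' t, |μ t| ≤ 1)
    {p : ℕ × Set T} (hp : IsHeavy B n μ p) : p.1 < n := by
  have hlt : (p.1 : ℝ) / n < 1 :=
    hp.2.trans_le ((hsum.tsum_subtype_le _ _ fun t => abs_nonneg (μ t)).trans hμ)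
  exact_mod_cast (div_lt_one (by positivity)).1 hlt

theorem IsHeavy.of_subset (hsum : Summable fun t => |μ t|) {k m : ℕ} {A C : Set T}
    (hA : IsHeavy B n μ (k, A)) (hC : C ∈ B m) (hAC : A ⊆ C) (hmk : m ≤ k) :
    IsHeavy B n μ (m, C) := by
  refine ⟨hC, lt_of_le_of_lt ?_ <|
    hA.2.trans_le (hsum.tsum_subtype_mono (fun t => abs_nonneg _) hAC)⟩
  gcongr

theorem IsHeavy.exists_terminal_subset (hn : 1 ≤ n) (hsum : Summable fun t => |μ t|)
    (hμ : ∑' t, |μ t| ≤ 1) {p : ℕ × Set T} (hp : IsHeavy B n μ p) :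
    ∃ q, IsTerminalHeavy B n μ q ∧ q.2 ⊆ p.2 ∧ p.1 ≤ q.1 := by
  by_cases hterm : IsTerminalHeavy B n μ p
  · exact ⟨p, hterm, subset_rfl, le_rfl⟩
  obtain ⟨A, hA, hAp, hheavy⟩ :
      ∃ A ∈ B (p.1 + 1), A ⊆ p.2 ∧ IsHeavy B n μ (p.1 + 1, A) := by
    simpa [IsTerminalHeavy, hp] using hterm
  have hdeeper : p.1 + 1 < n := hheavy.fst_lt hn hsum hμ
  obtain ⟨q, hq, hqA, hle⟩ := hheavy.exists_terminal_subset hn hsum hμ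
  exact ⟨q, hq, hqA.trans hAp, by omega⟩
termination_by n - p.1

theorem IsTerminalHeavy.disjoint (hdisj : ∀ m, (B m).PairwiseDisjoint id)
    (hrefine : ∀ m, ∀ A ∈ B (m + 1), ∃ A' ∈ B m, A ⊆ A') (hsum : Summable fun t => |μ t|)
    {p q : ℕ × Set T} (hp : IsTerminalHeavy B n μ p) (hq : IsTerminalHeavy B n μ q)
    (hpq : p ≠ q) : Disjoint p.2 q.2 := by
  wlog hle : p.1 ≤ q.1 generalizing p q
  · exact (this hq hp hpq.symm (by omega)).symm
  rcases hle.eq_or_lt with heq | hlt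
  · refine hdisj p.1 hp.1.1 (heq ▸ hq.1.1) fun h => hpq (Prod.ext heq h)
  -- the ancestor of `q.2` at level `p.1 + 1` is heavy, so it cannot lie inside `p.2`
  obtain ⟨A, hA, hqA⟩ := exists_superset_of_le hrefine hlt hq.1.1
  obtain ⟨C, hC, hAC⟩ := hrefine p.1 A hA
  have hpC : p.2 ≠ C := by
    rintro rfl
    exact hp.2 A hA hAC (hq.1.of_subset hsum hA hqA hlt)
  exact (hdisj p.1 hp.1.1 hC hpC).mono_right (hqA.trans hAC)

theorem sum_fst_lt (hn : 1 ≤ n) (hsum : Summable fun t => |μ t|) (hμ : ∑' t, |μ t| ≤ 1)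
    {G : Finset (ℕ × Set T)} (hG : ∀ p ∈ G, IsHeavy B n μ p)
    (hdisj : (G : Set (ℕ × Set T)).PairwiseDisjoint Prod.snd) : ∑ p ∈ G, p.1 < n := by
  rcases G.eq_empty_or_nonempty with rfl | hne
  · rwa [Finset.sum_empty]
  have hlt : ∑ p ∈ G, (p.1 : ℝ) / n < 1 :=
    calc ∑ p ∈ G, (p.1 : ℝ) / n < ∑ p ∈ G, ∑' t : p.2, |μ t| :=
          Finset.sum_lt_sum_of_nonempty hne fun p hp => (hG p hp).2
      _ ≤ ∑' t, |μ t| :=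
          hsum.sum_tsum_subtype_le_of_pairwiseDisjoint (fun t => abs_nonneg _) hdisj
      _ ≤ 1 := hμ
  rw [← Finset.sum_div, div_lt_one (by positivity)] at hlt
  exact_mod_cast hlt

theorem card_le_of_forall_isHeavy (hB0 : B 0 = {Set.univ}) (hne : ∀ m, ∀ A ∈ B m, A.Nonempty)
    (hdisj : ∀ m, (B m).PairwiseDisjoint id)
    (hrefine : ∀ m, ∀ A ∈ B (m + 1), ∃ A' ∈ B m, A ⊆ A') (hn : 1 ≤ n)
    (hsum : Summable fun t => |μ t|) (hμ : ∑' t, |μ t| ≤ 1) {F : Finset (ℕ × Set T)}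
    (hF : ∀ p ∈ F, IsHeavy B n μ p) : F.card ≤ n := by
  choose! φ hφ using fun p (hp : p ∈ F) => (hF p hp).exists_terminal_subset hn hsum hμ
  have hφF : ∀ q ∈ F.image φ, IsTerminalHeavy B n μ q := by
    simpa only [Finset.forall_mem_image] using fun p hp => (hφ p hp).1
  have hlevels : ∑ q ∈ F.image φ, q.1 < n :=
    sum_fst_lt hn hsum hμ (fun q hq => (hφF q hq).1)
      fun q hq q' hq' hqq' => (hφF q hq).disjoint hdisj hrefine hsum (hφF q' hq') hqq'
  have hroot : (F.filter (·.1 = 0)).card ≤ 1 := by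
    refine Finset.card_le_one.2 fun p hp p' hp' => ?_
    simp only [Finset.mem_filter] at hp hp'
    have h0 : p.2 ∈ B 0 ∧ p'.2 ∈ B 0 := ⟨hp.2 ▸ (hF p hp.1).1, hp'.2 ▸ (hF p' hp'.1).1⟩
    simp only [hB0, Set.mem_singleton_iff] at h0
    exact Prod.ext (hp.2.trans hp'.2.symm) (h0.1.trans h0.2.symm)
  have hrest : (F.filter (¬·.1 = 0)).card ≤ ∑ q ∈ F.image φ, q.1 :=
    calc (F.filter (¬·.1 = 0)).card
        ≤ ((F.image φ).sigma fun q => Finset.Icc 1 q.1).card := by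
          refine Finset.card_le_card_of_injOn (fun p => ⟨φ p, p.1⟩) ?_ ?_
          · intro p hp
            simp only [Finset.coe_filter, Set.mem_ofPred_eq] at hp
            simp only [Finset.coe_sigma, Set.mem_sigma_iff, Finset.coe_image, Set.mem_image,
              Finset.mem_coe, Finset.coe_Icc, Set.mem_Icc]
            exact ⟨⟨p, hp.1, rfl⟩, by omega, (hφ p hp.1).2.2⟩
          · intro p hp p' hp' hpp'
            simp only [Finset.coe_filter, Set.mem_ofPred_eq] at hp hp'
            obtain ⟨hφpp', hlevel⟩ : φ p = φ p' ∧ p.1 = p'.1 := by simpa using hpp'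
            have hp'B : p'.2 ∈ B p.1 := hlevel ▸ (hF p' hp'.1).1
            exact Prod.ext hlevel <| eq_of_subset_of_subset hne hdisj (hφ p hp.1).1.1.1
              (hF p hp.1).1 hp'B (hφ p hp.1).2.1 (hφpp' ▸ (hφ p' hp'.1).2.1)
      _ = ∑ q ∈ F.image φ, q.1 := by simp [Finset.card_sigma]
  rw [← Finset.card_filter_add_card_filter_not (p := (·.1 = 0))]
  omega

end TreePartition

open TreePartition in
theorem stmt_9_general {T : Type*} (B : ℕ → Set (Set T))
    (hB0 : B 0 = {Set.univ})
    (hne : ∀ m, ∀ A ∈ B m, A.Nonempty)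
    (hdisj : ∀ m, ∀ A ∈ B m, ∀ A' ∈ B m, A ≠ A' → A ∩ A' = ∅)
    (hrefine : ∀ m, ∀ A ∈ B (m + 1), ∃ A' ∈ B m, A ⊆ A')
    (n : ℕ) (hn : 1 ≤ n) (μ : T → ℝ)
    (hsum : Summable fun t => |μ t|) (hμ : ∑' t, |μ t| ≤ 1) :
    let heavy : ℕ × Set T → Prop := fun p => p.2 ∈ B p.1 ∧ (p.1 : ℝ) / n < ∑' t : p.2, |μ t|
    let 𝔗 : Set (ℕ × Set T) := {p | heavy p}
    let Q : Set (ℕ × Set T) :=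
      {p ∈ 𝔗 | ∀ A' ∈ B (p.1 + 1), A' ⊆ p.2 → ¬ heavy (p.1 + 1, A')}
    (∑' p : Q, ((p : ℕ × Set T).1 : ℝ≥0∞)) < n ∧ 𝔗.Finite ∧ Nat.card 𝔗 ≤ n := by
  intro heavy 𝔗 Q
  have hdisj' : ∀ m, (B m).PairwiseDisjoint id := fun m A hA A' hA' hAA' =>
    Set.disjoint_iff_inter_eq_empty.2 (hdisj m A hA A' hA' hAA')
  obtain ⟨h𝔗fin, h𝔗card⟩ := Set.finite_and_natCard_le_of_forall_finset_card_le fun F hF =>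
    card_le_of_forall_isHeavy hB0 hne hdisj' hrefine hn hsum hμ fun p hp => hF hp
  refine ⟨?_, h𝔗fin, h𝔗card⟩
  obtain ⟨G, hG⟩ := (h𝔗fin.subset fun p (hp : p ∈ Q) => hp.1).exists_finset_coe
  have hGterm : ∀ p ∈ G, IsTerminalHeavy B n μ p := fun p hp => (hG ▸ hp : p ∈ Q)
  rw [← hG, Finset.tsum_subtype' G fun p => (p.1 : ℝ≥0∞)]
  exact_mod_cast sum_fst_lt hn hsum hμ (fun p hp => (hGterm p hp).1)
    fun p hp q hq hpq => (hGterm p hp).disjoint hdisj' hrefine hsum (hGterm q hq) hpq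

/-- Heavy-domain lemma.  Let `(𝔅_m)_{m≥0}` be a refining sequence of tree partitions of `T`
with `𝔅₀ = {T}`, let `n ≥ 1` and `μ ∈ ℓ¹(T)` with `‖μ‖₁ ≤ 1`.  An element `A ∈ 𝔅_m`
(encoded as the pair `(m, A)`) is heavy if `|μ|(A) > m/n`.  If `𝔗` is the set of heavy
elements and `Q` is the set of terminal elements of the subtree `𝔗`, then
`∑_{B ∈ Q} |B| < n` (where `|B|` is the level) and consequently `𝔗` is finite with
`#𝔗 ≤ n`. -/
theorem stmt_9 {T : Type*} (B : ℕ → Set (Set T))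
    (hB0 : B 0 = {Set.univ})
    (hne : ∀ m, ∀ A ∈ B m, A.Nonempty)
    (hdisj : ∀ m, ∀ A ∈ B m, ∀ A' ∈ B m, A ≠ A' → A ∩ A' = ∅)
    (hcover : ∀ m, ⋃₀ B m = Set.univ)
    (hrefine : ∀ m, ∀ A ∈ B (m + 1), ∃ A' ∈ B m, A ⊆ A')
    (n : ℕ) (hn : 1 ≤ n) (μ : T → ℝ)
    (hsum : Summable fun t => |μ t|) (hμ : ∑' t, |μ t| ≤ 1) :
    let heavy : ℕ × Set T → Prop := fun p => p.2 ∈ B p.1 ∧ (p.1 : ℝ) / n < ∑' t : p.2, |μ t|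
    let 𝔗 : Set (ℕ × Set T) := {p | heavy p}
    let Q : Set (ℕ × Set T) :=
      {p ∈ 𝔗 | ∀ A' ∈ B (p.1 + 1), A' ⊆ p.2 → ¬ heavy (p.1 + 1, A')}
    (∑' p : Q, ((p : ℕ × Set T).1 : ℝ≥0∞)) < n ∧ 𝔗.Finite ∧ Nat.card 𝔗 ≤ n :=
  stmt_9_general B hB0 hne hdisj hrefine n hn μ hsum hμ
end

section
/- Let (𝔅_m)_{m≥0} be a refining sequence of tree partitions of a tree T with 𝔅₀ = {T}, giving 𝔅 the structure of a tree. Fix n ≥ 1 and μ ∈ ℓ¹(T) with ‖μ‖₁ ≤ 1, let 𝔗_μ be the subtree of heavy elements (those B with |μ|(B) > |B|/n), and define 𝔏_μ := {L ∈ 𝔅 : L is light and every strict ancestor of L in 𝔅 is heavy}. Then 𝔏_μ is a partition of T: the elements of 𝔏_μ, viewed as subsets of T, are pairwise disjoint and their union is T. -/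
/-- The extremal light domains form a partition of `T`.  With a refining sequence of tree
partitions `(𝔅_m)_{m≥0}` of `T` (`𝔅₀ = {T}`), `n ≥ 1`, and `μ ∈ ℓ¹(T)` with `‖μ‖₁ ≤ 1`,
call `(m, A)` (with `A ∈ 𝔅_m`) heavy if `|μ|(A) > m/n`, light otherwise.  Let
`𝔏_μ` be the set of light elements all of whose strict ancestors are heavy.  Then the
elements of `𝔏_μ`, viewed as subsets of `T`, are pairwise disjoint and their union is `T`. -/
theorem stmt_10 {T : Type*} (B : ℕ → Set (Set T))
    (hB0 : B 0 = {Set.univ})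
    (hne : ∀ m, ∀ A ∈ B m, A.Nonempty)
    (hdisj : ∀ m, ∀ A ∈ B m, ∀ A' ∈ B m, A ≠ A' → A ∩ A' = ∅)
    (hcover : ∀ m, ⋃₀ B m = Set.univ)
    (hrefine : ∀ m, ∀ A ∈ B (m + 1), ∃ A' ∈ B m, A ⊆ A')
    (n : ℕ) (hn : 1 ≤ n) (μ : T → ℝ)
    (hsum : Summable fun t => |μ t|) (hμ : ∑' t, |μ t| ≤ 1) :
    let heavy : ℕ × Set T → Prop := fun p => p.2 ∈ B p.1 ∧ (p.1 : ℝ) / n < ∑' t : p.2, |μ t|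
    let 𝔏 : Set (ℕ × Set T) := {p | p.2 ∈ B p.1 ∧ ¬ heavy p ∧
      ∀ m' A', m' < p.1 → A' ∈ B m' → p.2 ⊆ A' → heavy (m', A')}
    (∀ p ∈ 𝔏, ∀ p' ∈ 𝔏, p ≠ p' → p.2 ∩ p'.2 = ∅) ∧ ⋃ p ∈ 𝔏, p.2 = Set.univ := by
  intro heavy 𝔏
  classical
  -- uniqueness of partition element containing a given point
  have huniq : ∀ m, ∀ A ∈ B m, ∀ A' ∈ B m, ∀ t : T, t ∈ A → t ∈ A' → A = A' := by
    intro m A hA A' hA' t ht ht'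
    by_contra h
    have hd := hdisj m A hA A' hA' h
    have : t ∈ A ∩ A' := ⟨ht, ht'⟩
    rw [hd] at this
    exact this
  -- ancestors exist at every earlier level
  have hchain : ∀ m k, ∀ A ∈ B (m + k), ∃ A' ∈ B m, A ⊆ A' := by
    intro m k
    induction k with
    | zero => intro A hA; exact ⟨A, hA, subset_rfl⟩
    | succ k ih =>
      intro A hA
      obtain ⟨A', hA', hsub⟩ := hrefine (m + k) A hA
      obtain ⟨A'', hA'', hsub'⟩ := ih A' hA'
      exact ⟨A'', hA'', hsub.trans hsub'⟩
  have hchain' : ∀ m m', m ≤ m' → ∀ A ∈ B m', ∃ A' ∈ B m, A ⊆ A' := by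
    intro m m' hle A hA
    obtain ⟨k, rfl⟩ := Nat.exists_eq_add_of_le hle
    exact hchain m k A hA
  -- each point belongs to some element at every level
  have hex : ∀ t : T, ∀ m, ∃ A, A ∈ B m ∧ t ∈ A := by
    intro t m
    have : t ∈ ⋃₀ B m := by rw [hcover]; trivial
    simpa [Set.mem_sUnion] using this
  constructor
  · -- disjointness
    have key : ∀ p ∈ 𝔏, ∀ p' ∈ 𝔏, p.1 ≤ p'.1 → ∀ t, t ∈ p.2 → t ∈ p'.2 → p = p' := by
      intro p hp p' hp' hle t ht ht'
      rcases eq_or_lt_of_le hle with heq | hlt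
      · have h2 : p.2 = p'.2 := by
          apply huniq p.1 p.2 hp.1 p'.2 _ t ht ht'
          rw [heq]; exact hp'.1
        exact Prod.ext heq h2
      · obtain ⟨A'', hA'', hsub⟩ := hchain' p.1 p'.1 hle p'.2 hp'.1
        have hAeq : A'' = p.2 := huniq p.1 A'' hA'' p.2 hp.1 t (hsub ht') ht
        have hheavy : heavy (p.1, p.2) := hp'.2.2 p.1 p.2 hlt hp.1 (hAeq ▸ hsub)
        exact absurd hheavy hp.2.1
    intro p hp p' hp' hne'
    by_contra h
    obtain ⟨t, ht, ht'⟩ := Set.nonempty_iff_ne_empty.mpr h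
    rcases le_total p.1 p'.1 with hle | hle
    · exact hne' (key p hp p' hp' hle t ht ht')
    · exact hne' ((key p' hp' p hp hle t ht' ht).symm)
  · -- cover
    apply Set.eq_univ_of_forall
    intro t
    choose f hfB hft using hex t
    have hle1 : ∀ m, (∑' x : (f m : Set T), |μ x|) ≤ 1 := by
      intro m
      refine le_trans ?_ hμ
      exact Summable.tsum_le_tsum_of_inj (Subtype.val) Subtype.val_injective
        (fun _ _ => abs_nonneg _) (fun _ => le_rfl) (hsum.subtype _) hsum
    have hlight : ∃ m, ¬ heavy (m, f m) := by
      refine ⟨n + 1, ?_⟩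
      simp only [heavy, not_and, not_lt]
      intro _
      refine le_trans (hle1 _) ?_
      rw [le_div_iff₀ (by positivity)]
      push_cast
      have : (1 : ℝ) ≤ n := by exact_mod_cast hn
      nlinarith
    set m₀ := Nat.find hlight with hm₀def
    have hm₀ : ¬ heavy (m₀, f m₀) := Nat.find_spec hlight
    refine Set.mem_iUnion₂.mpr ⟨(m₀, f m₀), ⟨hfB m₀, hm₀, ?_⟩, hft m₀⟩
    intro m' A' hm' hA' hsub
    have hA'eq : A' = f m' := huniq m' A' hA' (f m') (hfB m') t (hsub (hft m₀)) (hft m')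
    rw [hA'eq]
    have := Nat.find_min hlight hm'
    simpa using this
end

section
/- Let D : ℓ¹(ℕ) → ℓ^q(ℕ) (1 < q ≤ 2) be the diagonal operator D(δ_k) = γ_k δ_k with γ_k ≤ C (log(k+1))^{−(1−1/q)}. Then the entropy numbers satisfy e_n(D) ≤ c' n^{−(1−1/q)} for all n ≥ 1, with c' depending only on C and q. -/
open Real Finset
open scoped ENNReal

theorem entropyNumber_le_of_forall_exists_norm_sub_le {X Y : Type*} [NormedAddCommGroup X]
    [NormedSpace ℝ X] [NormedAddCommGroup Y] [NormedSpace ℝ Y] {n : ℕ} {V : X →L[ℝ] Y}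
    {B : ℝ} (s : Finset Y) (hs : #s ≤ 2 ^ (n - 1))
    (hB : ∀ x : X, ‖x‖ ≤ 1 → ∃ y ∈ s, ‖V x - y‖ ≤ B) :
    entropyNumber n V ≤ B := by
  obtain ⟨y₀, -, hy₀⟩ := hB 0 (by simp)
  refine le_of_forall_gt_imp_ge_of_dense fun ε hε => csInf_le ⟨0, fun _ h => h.1.le⟩
    ⟨(norm_nonneg _).trans_lt (hy₀.trans_lt hε), s, hs, fun x hx => ?_⟩
  obtain ⟨y, hy, hxy⟩ := hB x hx
  exact ⟨y, hy, hxy.trans_lt hε⟩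

theorem lp.sum_norm_le_norm {α : Type*} {E : α → Type*} [∀ i, NormedAddCommGroup (E i)]
    (x : lp E 1) (s : Finset α) : ∑ i ∈ s, ‖x i‖ ≤ ‖x‖ := by
  simpa using lp.sum_rpow_le_norm_rpow (by simp) x s

theorem lp.norm_le_of_rpow_apply_le_mul_norm {α : Type*} {E F : α → Type*}
    [∀ i, NormedAddCommGroup (E i)] [∀ i, NormedAddCommGroup (F i)] {q B : ℝ} (hq : 0 < q)
    (hB : 0 ≤ B) (w : lp E (ENNReal.ofReal q)) {x : lp F 1} (hx : ‖x‖ ≤ 1)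
    (hw : ∀ i, ‖w i‖ ^ q ≤ B ^ q * ‖x i‖) : ‖w‖ ≤ B := by
  have hq' : (ENNReal.ofReal q).toReal = q := ENNReal.toReal_ofReal hq.le
  refine lp.norm_le_of_forall_sum_le (hq'.symm ▸ hq) hB fun s => ?_
  rw [hq']
  calc ∑ i ∈ s, ‖w i‖ ^ q ≤ ∑ i ∈ s, B ^ q * ‖x i‖ := sum_le_sum fun i _ => hw i
    _ ≤ B ^ q * 1 := by
      rw [← mul_sum]
      gcongr
      exact (lp.sum_norm_le_norm x s).trans hx
    _ = B ^ q := mul_one _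

theorem exists_int_abs_mul_le_and_abs_sub_le (y : ℝ) {η : ℝ} (hη : 0 < η) :
    ∃ m : ℤ, |(m : ℝ)| * η ≤ |y| ∧ |y - m * η| ≤ |y| ∧ |y - m * η| ≤ η := by
  set m := ⌊|y| / η⌋
  have hm₀ : (0 : ℝ) ≤ m := by exact_mod_cast Int.floor_nonneg.2 (by positivity)
  have hmη : 0 ≤ (m : ℝ) * η := mul_nonneg hm₀ hη.le
  have hm₁ : (m : ℝ) * η ≤ |y| := (le_div_iff₀ hη).1 (Int.floor_le _)
  have hm₂ : |y| < (m + 1) * η := (div_lt_iff₀ hη).1 (Int.lt_floor_add_one _)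
  rcases le_or_gt 0 y with hy | hy
  · rw [abs_of_nonneg hy] at hm₁ hm₂ ⊢
    refine ⟨m, by rwa [abs_of_nonneg hm₀], ?_⟩
    rw [abs_of_nonneg (by linarith)]
    constructor <;> linarith
  · rw [abs_of_neg hy] at hm₁ hm₂ ⊢
    refine ⟨-m, by rwa [Int.cast_neg, abs_neg, abs_of_nonneg hm₀], ?_⟩
    rw [Int.cast_neg, abs_of_nonpos (by linarith)]
    constructor <;> linarith

theorem rpow_le_rpow_sub_one_mul {e a η q : ℝ} (he : 0 ≤ e) (hea : e ≤ a) (heη : e ≤ η)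
    (hq : 1 ≤ q) : e ^ q ≤ η ^ (q - 1) * a := calc
  e ^ q = e ^ (q - 1) * e := by rw [← rpow_add_one' he (by linarith), sub_add_cancel]
  _ ≤ η ^ (q - 1) * a := by
    gcongr
    exact rpow_nonneg (he.trans heη) _

theorem rpow_neg_one_sub_inv_rpow_mul_rpow_sub_one {L q : ℝ} (hL : 0 < L) (hq : q ≠ 0) :
    (L ^ (-(1 - 1 / q))) ^ q * L ^ (q - 1) = 1 := by
  rw [← rpow_mul hL.le, ← rpow_add hL]
  field_simp
  simp

theorem rpow_le_of_le_weight_mul_of_le_width {q C c L e u : ℝ} (hq : 1 ≤ q) (hC : 0 ≤ C)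
    (hc : 0 ≤ c) (hL : 0 < L) (he : 0 ≤ e) (heu : e ≤ C * L ^ (-(1 - 1 / q)) * u)
    (heη : e ≤ c * L * (C * L ^ (-(1 - 1 / q)))) :
    e ^ q ≤ (C * c ^ (1 - 1 / q)) ^ q * u := calc
  e ^ q ≤ (c * L * (C * L ^ (-(1 - 1 / q)))) ^ (q - 1) * (C * L ^ (-(1 - 1 / q)) * u) :=
    rpow_le_rpow_sub_one_mul he heu heη hq
  _ = c ^ (q - 1) * C ^ q * ((L ^ (-(1 - 1 / q))) ^ q * L ^ (q - 1)) * u := by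
    have hsplit : ∀ a : ℝ, 0 ≤ a → a ^ q = a ^ (q - 1) * a := fun a ha => by
      rw [← rpow_add_one' ha (by linarith), sub_add_cancel]
    rw [mul_rpow (by positivity) (by positivity), mul_rpow hc hL.le,
      mul_rpow hC (by positivity), hsplit C hC, hsplit _ (by positivity)]
    ring
  _ = (C * c ^ (1 - 1 / q)) ^ q * u := by
    rw [rpow_neg_one_sub_inv_rpow_mul_rpow_sub_one hL (by linarith), mul_rpow hC (by positivity),
      ← rpow_mul hc]
    field_simp

theorem hasSum_pow_natAbs {r : ℝ} (h₀ : 0 ≤ r) (h₁ : r < 1) :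
    HasSum (fun j : ℤ => r ^ j.natAbs) ((1 + r) / (1 - r)) := by
  have hgeom := hasSum_geometric_of_lt_one h₀ h₁
  have hneg : HasSum (fun n : ℕ => r ^ (-((n : ℤ) + 1)).natAbs) (r * (1 - r)⁻¹) := by
    have hn : ∀ n : ℕ, (-((n : ℤ) + 1)).natAbs = n + 1 := by omega
    simpa only [hn, pow_succ'] using hgeom.mul_left r
  convert HasSum.of_nat_of_neg_add_one (f := fun j : ℤ => r ^ j.natAbs)
    (by simpa using hgeom) hneg using 1
  field_simp [(sub_pos.2 h₁).ne']

theorem sum_pow_natAbs_le_exp (s : Finset ℤ) {r : ℝ} (h₀ : 0 ≤ r) (h₁ : r ≤ 1 / 3) :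
    ∑ j ∈ s, r ^ j.natAbs ≤ exp (3 * r) := calc
  _ ≤ (1 + r) / (1 - r) :=
    sum_le_hasSum s (fun j _ => by positivity) (hasSum_pow_natAbs h₀ (by linarith))
  _ ≤ 1 + 3 * r := by rw [div_le_iff₀ (by linarith)]; nlinarith
  _ ≤ exp (3 * r) := by linarith [add_one_le_exp (3 * r)]

theorem card_filter_sum_natAbs_mul_le {ι : Type*} [Fintype ι] [DecidableEq ι] (s : Finset ℤ)
    (w : ι → ℝ) (R : ℝ) {θ : ℝ} (hθ : 0 ≤ θ) :
    (#{t ∈ Fintype.piFinset fun _ : ι => s | ∑ k, (t k).natAbs * w k ≤ R} : ℝ) ≤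
      exp (θ * R) * ∏ k, ∑ j ∈ s, exp (-(θ * w k)) ^ j.natAbs := by
  rw [prod_univ_sum, mul_sum, card_eq_sum_ones, Nat.cast_sum]
  refine (sum_le_sum fun t ht => ?_).trans
    (sum_le_sum_of_subset_of_nonneg (filter_subset _ _) fun _ _ _ => by positivity)
  have hexp : exp (θ * R) * ∏ k, exp (-(θ * w k)) ^ (t k).natAbs
      = exp (θ * (R - ∑ k, (t k).natAbs * w k)) := by
    simp only [← exp_nat_mul, ← exp_sum, ← exp_add, mul_sub, mul_sum]
    rw [sub_eq_add_neg, ← sum_neg_distrib]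
    ring_nf
  rw [Nat.cast_one, hexp, one_le_exp_iff]
  exact mul_nonneg hθ (sub_nonneg.2 (mem_filter.1 ht).2)

theorem eq_zero_of_sum_natAbs_mul_le {ι : Type*} [Fintype ι] {w : ι → ℝ} {a R : ℝ}
    (ha : 0 ≤ a) (hw : ∀ k, a ≤ w k) (hRa : R < a) {t : ι → ℤ}
    (ht : ∑ k, (t k).natAbs * w k ≤ R) : t = 0 := by
  funext k
  by_contra htk
  have hk : a ≤ (t k).natAbs * w k :=
    (hw k).trans <| le_mul_of_one_le_left (ha.trans (hw k))
      (by exact_mod_cast Int.natAbs_pos.2 htk)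
  have hsum := single_le_sum (f := fun j => (t j).natAbs * w j)
    (fun j _ => mul_nonneg (Nat.cast_nonneg _) (ha.trans (hw j))) (mem_univ k)
  linarith

theorem log_two_le_log_natCast_add_two (k : ℕ) : log 2 ≤ log ((k : ℝ) + 2) :=
  log_le_log two_pos (by linarith [k.cast_nonneg (α := ℝ)])

theorem log_pos_of_natCast_add_two (k : ℕ) : 0 < log ((k : ℝ) + 2) :=
  (log_pos one_lt_two).trans_le (log_two_le_log_natCast_add_two k)

theorem sum_range_inv_add_two_pow_three_le (K : ℕ) :
    ∑ k ∈ range K, (((k : ℝ) + 2) ^ 3)⁻¹ ≤ 1 / 2 - ((K : ℝ) + 2)⁻¹ := by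
  induction K with
  | zero => norm_num
  | succ K ih =>
    have hK : (((K : ℝ) + 2) ^ 3)⁻¹ ≤ ((K : ℝ) + 2)⁻¹ - ((K : ℝ) + 3)⁻¹ := by
      rw [inv_sub_inv (by positivity) (by positivity), inv_eq_one_div,
        div_le_div_iff₀ (by positivity) (by positivity)]
      nlinarith [(by positivity : (0 : ℝ) ≤ (K + 2) * (K ^ 2 + 3 * K + 1))]
    have hK3 : ((K + 1 : ℕ) : ℝ) + 2 = K + 3 := by push_cast; ring
    rw [sum_range_succ, hK3]
    linarith

theorem prod_sum_exp_neg_three_mul_log_le (s : Finset ℤ) (K : ℕ) :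
    ∏ k : Fin K, ∑ j ∈ s, exp (-(3 * log (((k : ℕ) : ℝ) + 2))) ^ j.natAbs ≤ exp (3 / 2) := by
  have hr : ∀ k : ℕ, exp (-(3 * log ((k : ℝ) + 2))) = (((k : ℝ) + 2) ^ 3)⁻¹ := fun k => by
    rw [exp_neg, ← exp_log (by positivity : (0 : ℝ) < (k : ℝ) + 2), ← exp_nat_mul,
      log_exp, Nat.cast_ofNat]
  calc _ ≤ ∏ k : Fin K, exp (3 * ((((k : ℕ) : ℝ) + 2) ^ 3)⁻¹) := by
        gcongr with k
        rw [hr]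
        refine sum_pow_natAbs_le_exp _ (by positivity) (inv_le_of_inv_le₀ (by norm_num) ?_)
        calc (1 / 3 : ℝ)⁻¹ ≤ 2 ^ 3 := by norm_num
          _ ≤ (((k : ℕ) : ℝ) + 2) ^ 3 := by gcongr; linarith [(k : ℕ).cast_nonneg (α := ℝ)]
    _ = exp (3 * ∑ k ∈ range K, (((k : ℝ) + 2) ^ 3)⁻¹) := by
        rw [← exp_sum, ← mul_sum, Fin.sum_univ_eq_sum_range (fun k => (((k : ℝ) + 2) ^ 3)⁻¹)]
    _ ≤ exp (3 / 2) := by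
        gcongr
        linarith [sum_range_inv_add_two_pow_three_le K, (by positivity : (0 : ℝ) ≤ ((K : ℝ) + 2)⁻¹)]

theorem card_filter_sum_natAbs_mul_log_le {n : ℕ} (hn : 1 ≤ n) (K : ℕ) :
    #{t ∈ Fintype.piFinset fun _ : Fin K => Icc (-(n : ℤ)) n |
      ∑ k : Fin K, (t k).natAbs * log (((k : ℕ) : ℝ) + 2) ≤ n / 10} ≤ 2 ^ (n - 1) := by
  rcases le_or_gt n 6 with hn6 | hn6
  · have hsmall : (n : ℝ) / 10 < log 2 := by
      have : (n : ℝ) ≤ 6 := by exact_mod_cast hn6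
      linarith [log_two_gt_d9]
    have hzero : ∀ {t : Fin K → ℤ},
        ∑ k : Fin K, (t k).natAbs * log (((k : ℕ) : ℝ) + 2) ≤ n / 10 → t = 0 :=
      eq_zero_of_sum_natAbs_mul_le (log_pos one_lt_two).le
        (fun k : Fin K => log_two_le_log_natCast_add_two k) hsmall
    refine (card_le_one.2 fun t ht t' ht' => ?_).trans Nat.one_le_two_pow
    rw [hzero (mem_filter.1 ht).2, hzero (mem_filter.1 ht').2]
  · have hpow : exp (3 * (n / 10)) * exp (3 / 2) ≤ 2 ^ (n - 1) := by
      rw [← exp_add, ← exp_log (two_pos : (0 : ℝ) < 2), ← exp_nat_mul, exp_log two_pos,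
        Nat.cast_sub hn, Nat.cast_one]
      gcongr
      have : (7 : ℝ) ≤ n := by exact_mod_cast hn6
      nlinarith [log_two_gt_d9]
    have hrankin := card_filter_sum_natAbs_mul_le (Icc (-(n : ℤ)) n)
      (fun k : Fin K => log (((k : ℕ) : ℝ) + 2)) (n / 10) (θ := 3) (by norm_num)
    exact_mod_cast hrankin.trans ((mul_le_mul_of_nonneg_left
      (prod_sum_exp_neg_three_mul_log_le _ K) (exp_pos _).le).trans hpow)

theorem mem_filter_sum_natAbs_mul_le {n K : ℕ} {L : ℕ → ℝ} (hL : ∀ k, 1 / 10 ≤ L k)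
    {x : lp (fun _ : ℕ => ℝ) 1} (hx : ‖x‖ ≤ 1) {m : ℕ → ℤ}
    (hm : ∀ k, (m k).natAbs * L k ≤ n / 10 * |x k|) :
    (fun k : Fin K => m k) ∈ {t ∈ Fintype.piFinset fun _ : Fin K => Icc (-(n : ℤ)) n |
      ∑ k : Fin K, (t k).natAbs * L k ≤ n / 10} := by
  refine mem_filter.2 ⟨Fintype.mem_piFinset.2 fun k => mem_Icc.2 ?_, ?_⟩
  · have hx₁ : |x k| ≤ 1 := (lp.norm_apply_le_norm one_ne_zero x k).trans hx
    have : ((m k).natAbs : ℝ) ≤ n := by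
      nlinarith [hm k, hL k, abs_nonneg (x k), ((m k).natAbs.cast_nonneg : (0 : ℝ) ≤ _)]
    have : (m k).natAbs ≤ n := by exact_mod_cast this
    omega
  · calc ∑ k : Fin K, ((m k).natAbs : ℝ) * L k ≤ ∑ k : Fin K, n / 10 * ‖x k‖ :=
          sum_le_sum fun k _ => hm k
      _ = n / 10 * ∑ k ∈ range K, ‖x k‖ := by
          rw [← mul_sum, Fin.sum_univ_eq_sum_range (fun k => ‖x k‖)]
      _ ≤ n / 10 * 1 := by gcongr; exact (lp.sum_norm_le_norm x _).trans hx
      _ = n / 10 := mul_one _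

noncomputable def gridPoint (p : ℝ≥0∞) (η : ℕ → ℝ) {K : ℕ} (t : Fin K → ℤ) :
    lp (fun _ : ℕ => ℝ) p :=
  ⟨fun k => if h : k < K then t ⟨k, h⟩ * η k else 0,
    (memℓp_zero ((Set.finite_lt_nat K).subset fun k hk => by
      by_contra h; exact hk (dif_neg h))).of_exponent_ge bot_le⟩

theorem gridPoint_apply (p : ℝ≥0∞) (η : ℕ → ℝ) {K : ℕ} (t : Fin K → ℤ) (k : ℕ) :
    gridPoint p η t k = if h : k < K then t ⟨k, h⟩ * η k else 0 := rfl

theorem abs_sub_gridPoint_apply_le (p : ℝ≥0∞) {η : ℕ → ℝ} {K : ℕ} {m : ℕ → ℤ} {y : ℝ} {k : ℕ}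
    (hm : |y - m k * η k| ≤ |y| ∧ |y - m k * η k| ≤ η k) (htail : K ≤ k → |y| ≤ η k) :
    |y - gridPoint p η (fun k : Fin K => m k) k| ≤ |y| ∧
      |y - gridPoint p η (fun k : Fin K => m k) k| ≤ η k := by
  rw [gridPoint_apply]
  split_ifs with hk
  · exact hm
  · rw [sub_zero]
    exact ⟨le_rfl, htail (not_lt.1 hk)⟩

noncomputable def gridWidth (q C : ℝ) (n k : ℕ) : ℝ :=
  10 / n * log ((k : ℝ) + 2) * (C * log ((k : ℝ) + 2) ^ (-(1 - 1 / q)))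

section DiagonalOperator

variable {q C : ℝ} {n : ℕ}

theorem gridWidth_pos (hC : 0 < C) (hn : 1 ≤ n) (k : ℕ) : 0 < gridWidth q C n k := by
  have hL := log_pos_of_natCast_add_two k
  unfold gridWidth
  positivity

theorem le_gridWidth_of_two_pow_le (hC : 0 ≤ C) (hn : 1 ≤ n) {k : ℕ} (hk : 2 ^ n ≤ k) :
    C * log ((k : ℝ) + 2) ^ (-(1 - 1 / q)) ≤ gridWidth q C n k := by
  have hlog : n * log 2 ≤ log ((k : ℝ) + 2) := by
    rw [← log_pow]
    gcongr
    exact_mod_cast hk.trans (Nat.le_add_right k 2)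
  refine le_mul_of_one_le_left (by have := log_pos_of_natCast_add_two k; positivity) ?_
  rw [div_mul_eq_mul_div, one_le_div (by exact_mod_cast hn)]
  nlinarith [log_two_gt_d9, n.cast_nonneg (α := ℝ)]

theorem natAbs_mul_log_le_of_abs_mul_gridWidth_le (hC : 0 < C) (hn : 1 ≤ n) {m : ℤ} {k : ℕ}
    {u : ℝ} (h : |(m : ℝ)| * gridWidth q C n k ≤ C * log ((k : ℝ) + 2) ^ (-(1 - 1 / q)) * u) :
    m.natAbs * log ((k : ℝ) + 2) ≤ n / 10 * u := by
  have hβ : 0 < C * log ((k : ℝ) + 2) ^ (-(1 - 1 / q)) := by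
    have := log_pos_of_natCast_add_two k; positivity
  have hn₀ : (0 : ℝ) < n := by exact_mod_cast hn
  refine le_of_mul_le_mul_right ?_ (mul_pos (div_pos (by norm_num : (0 : ℝ) < 10) hn₀) hβ)
  calc m.natAbs * log ((k : ℝ) + 2) * (10 / n * (C * log ((k : ℝ) + 2) ^ (-(1 - 1 / q))))
      = |(m : ℝ)| * gridWidth q C n k := by rw [Nat.cast_natAbs, Int.cast_abs, gridWidth]; ring
    _ ≤ C * log ((k : ℝ) + 2) ^ (-(1 - 1 / q)) * u := h
    _ = n / 10 * u * (10 / n * (C * log ((k : ℝ) + 2) ^ (-(1 - 1 / q)))) := by field_simp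

theorem exists_mem_filter_norm_sub_gridPoint_le [Fact (1 ≤ ENNReal.ofReal q)] (hC : 0 < C)
    {γ : ℕ → ℝ} (hγ : ∀ k : ℕ, |γ k| ≤ C * log ((k : ℝ) + 2) ^ (-(1 - 1 / q)))
    {D : lp (fun _ : ℕ => ℝ) 1 →L[ℝ] lp (fun _ : ℕ => ℝ) (ENNReal.ofReal q)}
    (hD : ∀ f k, D f k = γ k * f k) (hn : 1 ≤ n) {x : lp (fun _ : ℕ => ℝ) 1} (hx : ‖x‖ ≤ 1) :
    ∃ t ∈ {t ∈ Fintype.piFinset fun _ : Fin (2 ^ n) => Icc (-(n : ℤ)) n |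
        ∑ k : Fin (2 ^ n), (t k).natAbs * log (((k : ℕ) : ℝ) + 2) ≤ n / 10},
      ‖D x - gridPoint _ (gridWidth q C n) t‖ ≤ C * (10 / n) ^ (1 - 1 / q) := by
  have hq : 1 ≤ q := ENNReal.one_le_ofReal.1 Fact.out
  have hy : ∀ k, |γ k * x k| ≤ C * log ((k : ℝ) + 2) ^ (-(1 - 1 / q)) * |x k| := fun k => by
    rw [abs_mul]
    exact mul_le_mul_of_nonneg_right (hγ k) (abs_nonneg _)
  choose m hm using fun k =>
    exists_int_abs_mul_le_and_abs_sub_le (γ k * x k) (gridWidth_pos (q := q) hC hn k)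
  refine ⟨fun k => m k, mem_filter_sum_natAbs_mul_le (L := fun k => log ((k : ℝ) + 2))
    (fun k => ?_) hx fun k =>
      natAbs_mul_log_le_of_abs_mul_gridWidth_le hC hn ((hm k).1.trans (hy k)), ?_⟩
  · linarith [log_two_le_log_natCast_add_two k, log_two_gt_d9]
  refine lp.norm_le_of_rpow_apply_le_mul_norm (by linarith) (by positivity) _ hx fun k => ?_
  have herr := abs_sub_gridPoint_apply_le (p := ENNReal.ofReal q) (hm k).2 fun hk =>
    (hy k).trans <| (mul_le_of_le_one_right (by have := log_pos_of_natCast_add_two k; positivity)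
      ((lp.norm_apply_le_norm one_ne_zero x k).trans hx)).trans
      (le_gridWidth_of_two_pow_le hC.le hn hk)
  rw [lp.coeFn_sub, Pi.sub_apply, hD, Real.norm_eq_abs, Real.norm_eq_abs]
  exact rpow_le_of_le_weight_mul_of_le_width hq hC.le (by positivity)
    (log_pos_of_natCast_add_two k) (abs_nonneg _) (herr.1.trans (hy k)) herr.2

theorem entropyNumber_diagonal_le [Fact (1 ≤ ENNReal.ofReal q)] (hC : 0 < C) {γ : ℕ → ℝ}
    (hγ : ∀ k : ℕ, |γ k| ≤ C * log ((k : ℝ) + 2) ^ (-(1 - 1 / q)))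
    {D : lp (fun _ : ℕ => ℝ) 1 →L[ℝ] lp (fun _ : ℕ => ℝ) (ENNReal.ofReal q)}
    (hD : ∀ f k, D f k = γ k * f k) (hn : 1 ≤ n) :
    entropyNumber n D ≤ C * (10 / n) ^ (1 - 1 / q) := by
  classical
  refine entropyNumber_le_of_forall_exists_norm_sub_le
    (image (gridPoint _ (gridWidth q C n)) {t ∈ Fintype.piFinset fun _ : Fin (2 ^ n) =>
      Icc (-(n : ℤ)) n | ∑ k : Fin (2 ^ n), (t k).natAbs * log (((k : ℕ) : ℝ) + 2) ≤ n / 10})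
    (card_image_le.trans (card_filter_sum_natAbs_mul_log_le hn _)) fun x hx => ?_
  obtain ⟨t, ht, hxt⟩ := exists_mem_filter_norm_sub_gridPoint_le hC hγ hD hn hx
  exact ⟨_, mem_image_of_mem _ ht, hxt⟩

end DiagonalOperator

/-- Sequences are indexed from `0` here, so the paper's `log (k + 1)` becomes `log (k + 2)`. -/
theorem stmt_14 (q : ℝ) (hq1 : 1 < q) (C : ℝ) (hC : 0 < C) :
    ∃ c' > 0,
      letI : Fact (1 ≤ ENNReal.ofReal q) :=
        ⟨by rw [ENNReal.one_le_ofReal]; exact hq1.le⟩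
      ∀ γ : ℕ → ℝ, (∀ k, 0 ≤ γ k) →
        (∀ k : ℕ, γ k ≤ C * Real.log ((k : ℝ) + 2) ^ (-(1 - 1 / q))) →
        ∀ D : lp (fun _ : ℕ => ℝ) 1 →L[ℝ] lp (fun _ : ℕ => ℝ) (ENNReal.ofReal q),
          (∀ (f : lp (fun _ : ℕ => ℝ) 1) (k : ℕ), (D f : ∀ _ : ℕ, ℝ) k = γ k * (f : ∀ _ : ℕ, ℝ) k) →
          ∀ n : ℕ, 1 ≤ n → entropyNumber n D ≤ c' * (n : ℝ) ^ (-(1 - 1 / q)) := by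
  have : Fact (1 ≤ ENNReal.ofReal q) := ⟨ENNReal.one_le_ofReal.2 hq1.le⟩
  refine ⟨10 ^ (1 - 1 / q) * C, by positivity, fun γ hγ₀ hγ D hD n hn => ?_⟩
  calc entropyNumber n D ≤ C * (10 / n) ^ (1 - 1 / q) :=
        entropyNumber_diagonal_le hC (fun k => (abs_of_nonneg (hγ₀ k)).trans_le (hγ k)) hD hn
    _ = 10 ^ (1 - 1 / q) * C * (n : ℝ) ^ (-(1 - 1 / q)) := by
        rw [div_rpow (by norm_num) n.cast_nonneg, rpow_neg n.cast_nonneg]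
        ring
end

section
/- Fix q ∈ (1,2] and n ≥ 1, and let T be a tree with a refining sequence of tree partitions whose levels satisfy: every element B at level m containing a point s satisfies sup_{s∈B} d_𝕀(root(B), s) ≤ ε_m := (m log 2)^{−(1−1/q)}. Let μ ∈ ℓ¹(T), ‖μ‖₁ ≤ 1, and let 𝔏_μ be the partition of T into extremal light domains (each L ∈ 𝔏_μ at level |L| satisfies |μ|(L) ≤ |L|/n). Then ∑_{L∈𝔏_μ} |μ|(L)^q · ε_{|L|}^q ≤ c · n^{−(q−1)} for a constant c depending only on q. -/
/-!
Each extremal light domain `L` at level `m` has `|μ|(L) ≤ m / n`, so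
`|μ|(L)^q ε_m^q = |μ|(L) · (|μ|(L) / (m log 2))^(q-1) ≤ |μ|(L) · (n log 2)^(-(q-1))`.
Two distinct extremal light domains are disjoint: if they met, the coarser one would be an
ancestor of the finer one, hence heavy. Summing, the total is at most
`‖μ‖₁ (n log 2)^(-(q-1)) ≤ (log 2)^(-(q-1)) n^(-(q-1))`.
-/

open scoped ENNReal

lemma mass_rpow_mul_radius_rpow_le {q κ a : ℝ} {m n : ℕ} (hq : 1 ≤ q) (hκ : 0 < κ)
    (hn : 0 < n) (ha : 0 ≤ a) (hle : a ≤ m / n) :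
    a ^ q * (((m : ℝ) * κ) ^ (-(1 - 1 / q))) ^ q ≤
      a * (κ ^ (-(q - 1)) * (n : ℝ) ^ (-(q - 1))) := by
  rcases ha.eq_or_lt with rfl | hapos
  · simp [Real.zero_rpow (by linarith : q ≠ 0)]
  have hn' : (0 : ℝ) < n := by exact_mod_cast hn
  have hx : 0 < (m : ℝ) * κ :=
    mul_pos ((div_pos_iff_of_pos_right hn').1 (hapos.trans_le hle)) hκ
  have hexp : -(1 - 1 / q) * q = -(q - 1) := by field_simp
  have hsplit : a ^ q = a * a ^ (q - 1) := by
    rw [← Real.rpow_one_add' ha (by linarith)]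
    norm_num
  have hmass : a * n ≤ m := (le_div_iff₀ hn').1 hle
  calc a ^ q * (((m : ℝ) * κ) ^ (-(1 - 1 / q))) ^ q
      = a * (a / ((m : ℝ) * κ)) ^ (q - 1) := by
        rw [← Real.rpow_mul hx.le, hexp, hsplit, Real.div_rpow ha hx.le, Real.rpow_neg hx.le,
          div_eq_mul_inv, mul_assoc]
    _ ≤ a * (1 / (κ * n)) ^ (q - 1) := by
        refine mul_le_mul_of_nonneg_left (Real.rpow_le_rpow (by positivity) ?_ (by linarith)) ha
        rw [div_le_div_iff₀ hx (by positivity)]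
        nlinarith [mul_le_mul_of_nonneg_right hmass hκ.le]
    _ = a * (κ ^ (-(q - 1)) * (n : ℝ) ^ (-(q - 1))) := by
        rw [one_div, Real.inv_rpow (by positivity), Real.mul_rpow hκ.le hn'.le,
          Real.rpow_neg hκ.le, Real.rpow_neg hn'.le, mul_inv]

section TreePartitions

variable {T : Type*} {B : ℕ → Set (Set T)}

lemma exists_superset_mem_of_le (href : ∀ m, ∀ A ∈ B (m + 1), ∃ A' ∈ B m, A ⊆ A')
    {m m' : ℕ} (h : m ≤ m') {A : Set T} (hA : A ∈ B m') : ∃ A' ∈ B m, A ⊆ A' := by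
  induction m', h using Nat.le_induction generalizing A with
  | base => exact ⟨A, hA, subset_rfl⟩
  | succ k _ ih =>
    obtain ⟨A', hA', hAA'⟩ := href k A hA
    obtain ⟨A'', hA'', hA'A''⟩ := ih hA'
    exact ⟨A'', hA'', hAA'.trans hA'A''⟩

lemma eq_of_mem_of_mem (hdisj : ∀ m, ∀ A ∈ B m, ∀ A' ∈ B m, A ≠ A' → A ∩ A' = ∅)
    {m : ℕ} {A A' : Set T} (hA : A ∈ B m) (hA' : A' ∈ B m) {t : T} (ht : t ∈ A)
    (ht' : t ∈ A') : A = A' := by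
  by_contra h
  exact Set.eq_empty_iff_forall_notMem.mp (hdisj m A hA A' hA' h) t ⟨ht, ht'⟩

/-- Domains are pairs `(m, A)` with `A ∈ B m`, since the same set may occur at several levels. -/
def extremalLightDomains (B : ℕ → Set (Set T)) (ν : Set T → ℝ) (n : ℕ) : Set (ℕ × Set T) :=
  {p | p.2 ∈ B p.1 ∧ ν p.2 ≤ (p.1 : ℝ) / n ∧
    ∀ m' A', m' < p.1 → A' ∈ B m' → p.2 ⊆ A' → (m' : ℝ) / n < ν A'}

variable {ν : Set T → ℝ} {n : ℕ}

lemma extremalLightDomains.eq_of_le_of_mem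
    (hdisj : ∀ m, ∀ A ∈ B m, ∀ A' ∈ B m, A ≠ A' → A ∩ A' = ∅)
    (href : ∀ m, ∀ A ∈ B (m + 1), ∃ A' ∈ B m, A ⊆ A')
    {p p' : ℕ × Set T} (hp : p ∈ extremalLightDomains B ν n)
    (hp' : p' ∈ extremalLightDomains B ν n) (hle : p.1 ≤ p'.1) {t : T} (ht : t ∈ p.2)
    (ht' : t ∈ p'.2) : p = p' := by
  obtain ⟨hpB, hpLight, -⟩ := hp
  obtain ⟨hp'B, -, hp'Heavy⟩ := hp'
  obtain ⟨A, hA, hp'A⟩ := exists_superset_mem_of_le href hle hp'B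
  have hAp : A = p.2 := eq_of_mem_of_mem hdisj hA hpB (hp'A ht') ht
  subst hAp
  rcases hle.eq_or_lt with hlevel | hlt
  · exact Prod.ext hlevel (eq_of_mem_of_mem hdisj hpB (hlevel ▸ hp'B) ht ht')
  · exact absurd hpLight (not_le.2 (hp'Heavy p.1 _ hlt hA hp'A))

lemma extremalLightDomains.pairwiseDisjoint
    (hdisj : ∀ m, ∀ A ∈ B m, ∀ A' ∈ B m, A ≠ A' → A ∩ A' = ∅)
    (href : ∀ m, ∀ A ∈ B (m + 1), ∃ A' ∈ B m, A ⊆ A') :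
    (extremalLightDomains B ν n).PairwiseDisjoint Prod.snd := by
  intro p hp p' hp' hne
  refine Set.disjoint_left.2 fun t ht ht' => hne ?_
  rcases le_total p.1 p'.1 with hle | hle
  · exact extremalLightDomains.eq_of_le_of_mem hdisj href hp hp' hle ht ht'
  · exact (extremalLightDomains.eq_of_le_of_mem hdisj href hp' hp hle ht' ht).symm

end TreePartitions

theorem stmt_18_general (q : ℝ) (hq1 : 1 < q) :
    ∃ c > 0, ∀ (T : Type) (B : ℕ → Set (Set T)) (dI : T → T → ℝ) (n : ℕ) (μ : T → ℝ),
      B 0 = {Set.univ} →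
      (∀ m, ∀ A ∈ B m, A.Nonempty) →
      (∀ m, ∀ A ∈ B m, ∀ A' ∈ B m, A ≠ A' → A ∩ A' = ∅) →
      (∀ m, ⋃₀ B m = Set.univ) →
      (∀ m, ∀ A ∈ B (m + 1), ∃ A' ∈ B m, A ⊆ A') →
      (∀ m, 1 ≤ m → ∀ A ∈ B m, ∃ rt ∈ A, ∀ s ∈ A,
        dI rt s ≤ ((m : ℝ) * Real.log 2) ^ (-(1 - 1 / q))) →
      1 ≤ n →
      (Summable fun t => |μ t|) → (∑' t, |μ t|) ≤ 1 →
      (∑' p : {p : ℕ × Set T | p.2 ∈ B p.1 ∧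
            (∑' t : p.2, |μ t|) ≤ (p.1 : ℝ) / n ∧
            ∀ m' A', m' < p.1 → A' ∈ B m' → p.2 ⊆ A' →
              (m' : ℝ) / n < ∑' t : A', |μ t|},
          ENNReal.ofReal ((∑' t : (p : ℕ × Set T).2, |μ t|) ^ q *
            ((((p : ℕ × Set T).1 : ℝ) * Real.log 2) ^ (-(1 - 1 / q))) ^ q)) ≤
        ENNReal.ofReal (c * (n : ℝ) ^ (-(q - 1))) := by
  refine ⟨Real.log 2 ^ (-(q - 1)), by positivity, ?_⟩
  intro T B _ n μ _ _ hdisj _ href _ hn hsum hnorm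
  set S := extremalLightDomains B (fun A => ∑' t : A, |μ t|) n
  set K := ENNReal.ofReal (Real.log 2 ^ (-(q - 1)) * (n : ℝ) ^ (-(q - 1)))
  have hterm (p : S) :
      ENNReal.ofReal ((∑' t : p.1.2, |μ t|) ^ q *
        (((p.1.1 : ℝ) * Real.log 2) ^ (-(1 - 1 / q))) ^ q) ≤
      (∑' t : p.1.2, ENNReal.ofReal |μ t|) * K := by
    have hmass : 0 ≤ ∑' t : p.1.2, |μ t| := tsum_nonneg fun _ => abs_nonneg _
    rw [← ENNReal.ofReal_tsum_of_nonneg (fun _ => abs_nonneg _) (hsum.subtype _),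
      ← ENNReal.ofReal_mul hmass]
    exact ENNReal.ofReal_le_ofReal (mass_rpow_mul_radius_rpow_le hq1.le (Real.log_pos one_lt_two)
      hn hmass p.2.2.1)
  calc _ ≤ ∑' p : S, (∑' t : p.1.2, ENNReal.ofReal |μ t|) * K := ENNReal.tsum_le_tsum hterm
    _ = (∑' t : ⋃ p ∈ S, p.2, ENNReal.ofReal |μ t|) * K := by
      rw [ENNReal.tsum_mul_right]
      exact congrArg (· * K) (ENNReal.tsum_biUnion' (f := fun t => ENNReal.ofReal |μ t|)
        (extremalLightDomains.pairwiseDisjoint (ν := fun A => ∑' t : A, |μ t|) hdisj href)).symm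
    _ ≤ (∑' t, ENNReal.ofReal |μ t|) * K := by
      gcongr
      exact ENNReal.tsum_comp_le_tsum_of_injective Subtype.val_injective _
    _ ≤ 1 * K := by
      gcongr
      rw [← ENNReal.ofReal_tsum_of_nonneg (fun _ => abs_nonneg _) hsum]
      exact ENNReal.ofReal_le_one.2 hnorm
    _ = _ := one_mul K

/-- Key computation for the approximation error (Proposition 4.7).  Fix `q ∈ (1,2]` and
`ε_m := (m log 2)^{-(1-1/q)}`.  Let `(𝔅_m)_{m≥0}` be a refining sequence of tree
partitions of `T` (`𝔅₀ = {T}`) such that every element `A ∈ 𝔅_m` (`m ≥ 1`) has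
`d_𝕀`-radius at most `ε_m` from its root.  For `n ≥ 1` and `μ ∈ ℓ¹(T)` with `‖μ‖₁ ≤ 1`,
let `𝔏_μ` be the partition into extremal light domains (`(m,A)` light means
`|μ|(A) ≤ m/n`, and all strict ancestors heavy).  Then
`∑_{L ∈ 𝔏_μ} |μ|(L)^q ε_{|L|}^q ≤ c n^{-(q-1)}` with `c` depending only on `q`. -/
theorem stmt_18 (q : ℝ) (hq1 : 1 < q) (hq2 : q ≤ 2) :
    ∃ c > 0, ∀ (T : Type) (B : ℕ → Set (Set T)) (dI : T → T → ℝ) (n : ℕ) (μ : T → ℝ),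
      B 0 = {Set.univ} →
      (∀ m, ∀ A ∈ B m, A.Nonempty) →
      (∀ m, ∀ A ∈ B m, ∀ A' ∈ B m, A ≠ A' → A ∩ A' = ∅) →
      (∀ m, ⋃₀ B m = Set.univ) →
      (∀ m, ∀ A ∈ B (m + 1), ∃ A' ∈ B m, A ⊆ A') →
      (∀ m, 1 ≤ m → ∀ A ∈ B m, ∃ rt ∈ A, ∀ s ∈ A,
        dI rt s ≤ ((m : ℝ) * Real.log 2) ^ (-(1 - 1 / q))) →
      1 ≤ n →
      (Summable fun t => |μ t|) → (∑' t, |μ t|) ≤ 1 →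
      (∑' p : {p : ℕ × Set T | p.2 ∈ B p.1 ∧
            (∑' t : p.2, |μ t|) ≤ (p.1 : ℝ) / n ∧
            ∀ m' A', m' < p.1 → A' ∈ B m' → p.2 ⊆ A' →
              (m' : ℝ) / n < ∑' t : A', |μ t|},
          ENNReal.ofReal ((∑' t : (p : ℕ × Set T).2, |μ t|) ^ q *
            ((((p : ℕ × Set T).1 : ℝ) * Real.log 2) ^ (-(1 - 1 / q))) ^ q)) ≤
        ENNReal.ofReal (c * (n : ℝ) ^ (-(q - 1))) :=
  stmt_18_general q hq1
end
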